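/- arXiv:1312.2569 — 6 statements merged into one kernel-verified Lean document; each statement's English description precedes it below -/
import Mathlib

section
/- For every prime p there exists a positive integer n such that the largest prime factor of g(n) is equal to p. -/
/-- Landau's function: the maximal order of an element of the symmetric group `S_n`. -/
noncomputable def landau (n : ℕ) : ℕ :=
  Finset.univ.sup fun σ : Equiv.Perm (Fin n) => orderOf σ

/-!
Write `ℓ(N) = ∑ q ^ v_q(N)` over the primes `q ∣ N`. An element of `S_n` of order `L` has
`ℓ(L) ≤ n`, and the prime powers exactly dividing `N` are the cycle lengths of an element of
`S_{ℓ(N)}` of order `N`; hence `g(ℓ(N)) = N` as soon as `N` beats every `L` with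
`ℓ(L) ≤ ℓ(N)`.

For a prime `p ≥ 3` such an `N` is obtained by maximising `p log L - log p · ℓ(L)`. This splits
into independent contributions `p k log q - log p · q ^ k` of the primes `q`, so each exponent can
be optimised separately: `k = 1` is optimal at `q = p`, and `k = 0` is optimal at `q > p`
because `q ^ p ≤ p ^ q`. The maximiser is therefore divisible by `p` and by no larger prime.
For `p = 2` (where `3 ^ 2 > 2 ^ 3`) one uses `g(2) = 2` instead.
-/

open Finset

-- the length of a `q ^ k`-cycle, with no cycle at all for `k = 0`
def primePowerCost (q k : ℕ) : ℕ := if k = 0 then 0 else q ^ k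

-- `ℓ(N)`
def primePowerSum (N : ℕ) : ℕ := N.factorization.sum primePowerCost

lemma primePowerCost_max_le (q a b : ℕ) :
    primePowerCost q (max a b) ≤ primePowerCost q a + primePowerCost q b := by
  rcases le_total a b with h | h
  · rw [max_eq_right h]; exact Nat.le_add_left _ _
  · rw [max_eq_left h]; exact Nat.le_add_right _ _

lemma primePowerSum_eq_sum_of_subset {N : ℕ} {U : Finset ℕ} (hU : N.primeFactors ⊆ U) :
    primePowerSum N = ∑ q ∈ U, primePowerCost q (N.factorization q) :=
  Finsupp.sum_of_support_subset _ (by rwa [Nat.support_factorization]) _ fun _ _ => rfl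

lemma primePowerSum_eq_sum (N : ℕ) :
    primePowerSum N = ∑ q ∈ N.primeFactors, q ^ N.factorization q := by
  rw [primePowerSum_eq_sum_of_subset subset_rfl]
  refine sum_congr rfl fun q hq => if_neg ?_
  rw [← Nat.support_factorization] at hq
  exact Finsupp.mem_support_iff.1 hq

lemma primePowerSum_pos {N : ℕ} (hN : N.primeFactors.Nonempty) : 0 < primePowerSum N := by
  rw [primePowerSum_eq_sum]
  exact sum_pos (fun q hq => pow_pos (Nat.prime_of_mem_primeFactors hq).pos _) hN

lemma Finset.sum_le_prod_of_two_le {ι : Type*} (s : Finset ι) (f : ι → ℕ)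
    (hf : ∀ i ∈ s, 2 ≤ f i) : ∑ i ∈ s, f i ≤ ∏ i ∈ s, f i := by
  classical
  induction s using Finset.induction_on with
  | empty => simp
  | insert a s ha ih =>
    rw [sum_insert ha, prod_insert ha]
    have hfs : ∀ i ∈ s, 2 ≤ f i := fun i hi => hf i (mem_insert_of_mem hi)
    rcases s.eq_empty_or_nonempty with rfl | hs
    · simp
    · have hprod : 2 ≤ ∏ i ∈ s, f i :=
        calc 2 ≤ 2 ^ #s := Nat.le_self_pow (card_ne_zero.2 hs) 2
          _ ≤ ∏ i ∈ s, f i := pow_card_le_prod s f 2 hfs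
      calc f a + ∑ i ∈ s, f i ≤ f a + ∏ i ∈ s, f i := Nat.add_le_add_left (ih hfs) _
        _ ≤ f a * ∏ i ∈ s, f i := Nat.add_le_mul (hf a (mem_insert_self a s)) hprod

lemma primePowerSum_le_self {N : ℕ} (hN : N ≠ 0) : primePowerSum N ≤ N := by
  rw [primePowerSum_eq_sum]
  refine (sum_le_prod_of_two_le _ _ fun q hq => ?_).trans
    (Nat.prod_primeFactors_pow_factorization hN).ge
  have hq' : N.factorization q ≠ 0 := by
    rw [← Nat.support_factorization] at hq
    exact Finsupp.mem_support_iff.1 hq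
  exact Nat.one_lt_pow hq' (Nat.prime_of_mem_primeFactors hq).one_lt

lemma primePowerSum_lcm_le {a b : ℕ} (ha : a ≠ 0) (hb : b ≠ 0) :
    primePowerSum (a.lcm b) ≤ primePowerSum a + primePowerSum b := by
  classical
  have hlcm : (a.lcm b).primeFactors = a.primeFactors ∪ b.primeFactors := by
    simp only [← Nat.support_factorization, Nat.factorization_lcm ha hb, Finsupp.support_sup]
  rw [primePowerSum_eq_sum_of_subset hlcm.le,
    primePowerSum_eq_sum_of_subset (subset_union_left (s₂ := b.primeFactors)),
    primePowerSum_eq_sum_of_subset (subset_union_right (s₁ := a.primeFactors)),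
    ← sum_add_distrib]
  refine sum_le_sum fun q _ => ?_
  rw [Nat.factorization_lcm ha hb, Finsupp.sup_apply]
  exact primePowerCost_max_le q _ _

lemma primePowerSum_lcm_le_sum {m : Multiset ℕ} (hm : 0 ∉ m) :
    primePowerSum m.lcm ≤ m.sum := by
  induction m using Multiset.induction_on with
  | empty => simp [primePowerSum]
  | cons a m ih =>
    rw [Multiset.mem_cons, not_or] at hm
    rw [Multiset.lcm_cons, Multiset.sum_cons, lcm_eq_nat_lcm]
    calc primePowerSum (a.lcm m.lcm) ≤ primePowerSum a + primePowerSum m.lcm :=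
          primePowerSum_lcm_le (Ne.symm hm.1) ((Multiset.lcm_ne_zero_iff m).2 hm.2)
      _ ≤ a + m.sum := Nat.add_le_add (primePowerSum_le_self (Ne.symm hm.1)) (ih hm.2)

theorem primePowerSum_orderOf_le {α : Type*} [Fintype α] [DecidableEq α] (σ : Equiv.Perm α) :
    primePowerSum (orderOf σ) ≤ Fintype.card α := by
  rw [← σ.lcm_cycleType]
  refine (primePowerSum_lcm_le_sum fun h => ?_).trans σ.sum_cycleType_le
  exact absurd (Equiv.Perm.two_le_of_mem_cycleType h) (by norm_num)

theorem exists_perm_orderOf_eq {N : ℕ} (hN : N ≠ 0) :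
    ∃ σ : Equiv.Perm (Fin (primePowerSum N)), orderOf σ = N := by
  set m := N.primeFactors.val.map fun q => q ^ N.factorization q
  have hsum : m.sum = primePowerSum N := by rw [primePowerSum_eq_sum]; rfl
  have hlcm : m.lcm = N := by
    have hcop : Set.Pairwise N.primeFactors (Nat.Coprime.onFun fun q => q ^ N.factorization q) :=
      fun q hq r hr hqr => Nat.Coprime.pow _ _ <|
        (Nat.coprime_primes (Nat.prime_of_mem_primeFactors hq)
          (Nat.prime_of_mem_primeFactors hr)).2 hqr
    rw [← Finset.lcm_def, Finset.lcm_eq_prod hcop]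
    exact (Nat.prod_primeFactors_pow_factorization hN).symm
  have hm2 : ∀ c ∈ m, 2 ≤ c := by
    simp only [m, Multiset.mem_map, Finset.mem_val]
    rintro _ ⟨q, hq, rfl⟩
    exact Nat.one_lt_pow (Finsupp.mem_support_iff.1 (by rwa [Nat.support_factorization]))
      (Nat.prime_of_mem_primeFactors hq).one_lt
  obtain ⟨σ, hσ⟩ := (Equiv.Perm.exists_with_cycleType_iff _).2
    ⟨(hsum.trans (Fintype.card_fin _).symm).le, hm2⟩
  exact ⟨σ, by rw [← σ.lcm_cycleType, hσ, hlcm]⟩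

lemma orderOf_le_landau {n : ℕ} (σ : Equiv.Perm (Fin n)) : orderOf σ ≤ landau n :=
  Finset.le_sup (mem_univ σ)

lemma le_landau_primePowerSum {N : ℕ} (hN : N ≠ 0) : N ≤ landau (primePowerSum N) := by
  obtain ⟨σ, hσ⟩ := exists_perm_orderOf_eq hN
  exact hσ.ge.trans (orderOf_le_landau σ)

theorem landau_primePowerSum_eq {N : ℕ} (hN : N ≠ 0)
    (hmax : ∀ L ≠ 0, primePowerSum L ≤ primePowerSum N → L ≤ N) :
    landau (primePowerSum N) = N := by
  refine le_antisymm (Finset.sup_le fun σ _ => hmax _ (orderOf_pos σ).ne' ?_)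
    (le_landau_primePowerSum hN)
  simpa using primePowerSum_orderOf_le σ

lemma landau_two : landau 2 = 2 := by
  refine le_antisymm (Finset.sup_le fun σ _ => Nat.le_of_dvd two_pos ?_) ?_
  · simpa [Fintype.card_perm] using orderOf_dvd_card (x := σ)
  · have h2 : primePowerSum 2 = 2 := by
      simp [primePowerSum, Nat.prime_two.factorization, primePowerCost]
    simpa [h2] using le_landau_primePowerSum two_ne_zero

-- `N` maximises `p log L - log p · ℓ(L)`, i.e. it is an `ℓ`-superchampion number for the
-- parameter `log p / p`
def IsSuperchampion (p N : ℕ) : Prop :=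
  N ≠ 0 ∧ ∀ L ≠ 0, L ^ p * p ^ primePowerSum N ≤ N ^ p * p ^ primePowerSum L

lemma IsSuperchampion.le_of_primePowerSum_le {p N L : ℕ} (hp : 0 < p) (hN : IsSuperchampion p N)
    (hL : L ≠ 0) (hLN : primePowerSum L ≤ primePowerSum N) : L ≤ N := by
  have h : L ^ p * p ^ primePowerSum N ≤ N ^ p * p ^ primePowerSum N :=
    (hN.2 L hL).trans (Nat.mul_le_mul_left _ (Nat.pow_le_pow_right hp hLN))
  exact (Nat.pow_le_pow_iff_left hp.ne').1 (Nat.le_of_mul_le_mul_right h (pow_pos hp _))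

theorem landau_primePowerSum_of_isSuperchampion {p N : ℕ} (hp : 0 < p)
    (hN : IsSuperchampion p N) : landau (primePowerSum N) = N :=
  landau_primePowerSum_eq hN.1 fun _ hL hLN => hN.le_of_primePowerSum_le hp hL hLN

-- `a` maximises the contribution `p k log q - log p · ℓ(q ^ k)` of the prime `q`
def IsOptimalExponent (p q a : ℕ) : Prop :=
  ∀ k, (q ^ k) ^ p * p ^ primePowerCost q a ≤ (q ^ a) ^ p * p ^ primePowerCost q k

lemma pow_mul_pow_primePowerSum_eq_prod {p M K : ℕ} {U : Finset ℕ} (hM : M ≠ 0)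
    (hMU : M.primeFactors ⊆ U) (hKU : K.primeFactors ⊆ U) :
    M ^ p * p ^ primePowerSum K =
      ∏ q ∈ U, (q ^ M.factorization q) ^ p * p ^ primePowerCost q (K.factorization q) := by
  rw [prod_mul_distrib, prod_pow, prod_pow_eq_pow_sum, ← primePowerSum_eq_sum_of_subset hKU,
    ← Finsupp.prod_of_support_subset _ (by rwa [Nat.support_factorization]) (· ^ ·)
      (fun _ _ => pow_zero _), Nat.prod_factorization_pow_eq_self hM]

theorem isSuperchampion_prod_pow {p : ℕ} (f : ℕ →₀ ℕ) (hf : ∀ q ∈ f.support, q.Prime)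
    (hopt : ∀ q, q.Prime → IsOptimalExponent p q (f q)) :
    IsSuperchampion p (f.prod (· ^ ·)) := by
  classical
  set N := f.prod (· ^ ·)
  have hfN : N.factorization = f := Nat.prod_pow_factorization_eq_self hf
  have hN : N ≠ 0 := Finsupp.prod_ne_zero_iff.2 fun q hq => pow_ne_zero _ (hf q hq).ne_zero
  refine ⟨hN, fun L hL => ?_⟩
  rw [pow_mul_pow_primePowerSum_eq_prod hL subset_union_left subset_union_right,
    pow_mul_pow_primePowerSum_eq_prod hN subset_union_right subset_union_left]
  refine prod_le_prod' fun q hq => ?_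
  have hq : q.Prime :=
    (mem_union.1 hq).elim Nat.prime_of_mem_primeFactors Nat.prime_of_mem_primeFactors
  rw [hfN]
  exact hopt q hq _

lemma pow_le_pow_swap {p q : ℕ} (hp : 3 ≤ p) (hpq : p ≤ q) : q ^ p ≤ p ^ q := by
  have hp' : (3 : ℝ) ≤ p := by exact_mod_cast hp
  have hpq' : (p : ℝ) ≤ q := by exact_mod_cast hpq
  have he : Real.exp 1 ≤ p := (Real.exp_one_lt_d9.trans (by norm_num)).le.trans hp'
  have h := Real.log_div_self_antitoneOn he (he.trans hpq') hpq'
  simp only at h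
  rw [div_le_div_iff₀ (by linarith) (by linarith)] at h
  rw [← Nat.cast_le (α := ℝ), Nat.cast_pow, Nat.cast_pow,
    ← Real.log_le_log_iff (pow_pos (by linarith) _) (pow_pos (by linarith) _), Real.log_pow,
    Real.log_pow]
  linarith

lemma mul_le_two_pow {p k : ℕ} (hk : 2 * p ≤ k) : p * k ≤ 2 ^ k := by
  obtain ⟨m, rfl⟩ : ∃ m, k = p + m := ⟨k - p, by omega⟩
  calc p * (p + m) ≤ p * (2 * m) := Nat.mul_le_mul_left p (by omega)
    _ ≤ 2 ^ p * 2 ^ m := Nat.mul_le_mul p.lt_two_pow_self.le (Nat.mul_le_pow (by norm_num) m)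
    _ = 2 ^ (p + m) := (pow_add 2 p m).symm

lemma isOptimalExponent_self_one {p : ℕ} (hp : 2 ≤ p) : IsOptimalExponent p p 1 := by
  intro k
  rcases Nat.eq_zero_or_pos k with rfl | hk
  · simp [primePowerCost]
  · simp only [primePowerCost, one_ne_zero, hk.ne', if_false, pow_one, ← pow_mul, ← pow_add]
    refine Nat.pow_le_pow_right (by omega) ?_
    have := Nat.mul_le_pow (by omega : p ≠ 1) k
    nlinarith

lemma pow_pow_le_pow_primePowerCost {p q k : ℕ} (hqp : q ≤ p) (hq : 2 ≤ q)
    (hk : 2 * p ≤ k) :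
    (q ^ k) ^ p ≤ p ^ primePowerCost q k := by
  rw [primePowerCost, if_neg (by omega), ← pow_mul]
  calc q ^ (k * p) ≤ p ^ (k * p) := Nat.pow_le_pow_left hqp _
    _ ≤ p ^ q ^ k := Nat.pow_le_pow_right (by omega) <| by
      rw [mul_comm]; exact (mul_le_two_pow hk).trans (Nat.pow_le_pow_left hq k)

lemma isOptimalExponent_zero_of_lt {p q : ℕ} (hp : 3 ≤ p) (hpq : p < q) :
    IsOptimalExponent p q 0 := by
  intro k
  rcases Nat.eq_zero_or_pos k with rfl | hk
  · simp
  simp only [primePowerCost, hk.ne', if_false, if_true, pow_zero, one_pow, mul_one, one_mul]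
  calc (q ^ k) ^ p = (q ^ p) ^ k := by rw [← pow_mul, ← pow_mul, mul_comm]
    _ ≤ (p ^ q) ^ k := Nat.pow_le_pow_left (pow_le_pow_swap hp hpq.le) k
    _ = p ^ (q * k) := by rw [← pow_mul]
    _ ≤ p ^ q ^ k := Nat.pow_le_pow_right (by omega) (Nat.mul_le_pow (by omega) k)

lemma exists_isOptimalExponent {p q : ℕ} (hq : 2 ≤ q) (hqp : q ≤ p) :
    ∃ a, IsOptimalExponent p q a := by
  have hq0 : 0 < q := by omega
  have hp0 : 0 < p := by omega
  let w : ℕ → ℚ := fun k => ((q ^ k) ^ p : ℕ) / (p ^ primePowerCost q k : ℕ)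
  have hw : ∀ a k, w k ≤ w a ↔ (q ^ k) ^ p * p ^ primePowerCost q a ≤
      (q ^ a) ^ p * p ^ primePowerCost q k := fun a k => by
    rw [div_le_div_iff₀ (by positivity) (by positivity)]
    exact_mod_cast Iff.rfl
  obtain ⟨a, -, ha⟩ := (range (2 * p)).exists_max_image w ⟨0, mem_range.2 (by omega)⟩
  refine ⟨a, fun k => (hw a k).1 ?_⟩
  -- exponents `k ≥ 2 * p` do worse than `k = 0`
  rcases lt_or_ge k (2 * p) with hk | hk
  · exact ha k (mem_range.2 hk)
  · calc w k ≤ w 0 := (hw 0 k).2 <| by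
          simpa [primePowerCost] using pow_pow_le_pow_primePowerCost hqp hq hk
      _ ≤ w a := ha 0 (mem_range.2 (by omega))

theorem exists_isSuperchampion {p : ℕ} (hp : p.Prime) (hp3 : 3 ≤ p) :
    ∃ N, IsSuperchampion p N ∧ p ∈ N.primeFactors ∧ ∀ q ∈ N.primeFactors, q ≤ p := by
  classical
  have hex : ∀ q, ∃ a, q.Prime → q < p → IsOptimalExponent p q a := fun q => by
    by_cases hq : q.Prime ∧ q < p
    · exact (exists_isOptimalExponent hq.1.two_le hq.2.le).imp fun _ ha _ _ => ha
    · exact ⟨0, fun h₁ h₂ => absurd ⟨h₁, h₂⟩ hq⟩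
  choose a ha using hex
  let e : ℕ → ℕ := fun q => if q = p then 1 else if q.Prime ∧ q < p then a q else 0
  let f : ℕ →₀ ℕ := Finsupp.onFinset (range (p + 1)) e fun q hq => by
    simp only [e] at hq; split_ifs at hq with h₁ h₂ <;> simp [mem_range] <;> omega
  have hf : ∀ q ∈ f.support, q.Prime ∧ q ≤ p := fun q hq => by
    rw [Finsupp.mem_support_iff, Finsupp.onFinset_apply] at hq
    simp only [e] at hq; split_ifs at hq with h₁ h₂
    exacts [⟨h₁ ▸ hp, h₁.le⟩, ⟨h₂.1, h₂.2.le⟩, absurd rfl hq]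
  have hfp : f p = 1 := by simp [f, e]
  have hopt : ∀ q, q.Prime → IsOptimalExponent p q (f q) := fun q hq => by
    rcases lt_trichotomy q p with hlt | rfl | hgt
    · simpa [f, e, hlt.ne, hq, hlt] using ha q hq hlt
    · simpa [hfp] using isOptimalExponent_self_one hp.two_le
    · simpa [f, e, hgt.ne', hgt.not_gt] using isOptimalExponent_zero_of_lt hp3 hgt
  have hfN : (f.prod (· ^ ·)).factorization = f :=
    Nat.prod_pow_factorization_eq_self fun q hq => (hf q hq).1
  refine ⟨_, isSuperchampion_prod_pow f (fun q hq => (hf q hq).1) hopt, ?_, fun q hq => ?_⟩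
  · rw [← Nat.support_factorization, hfN, Finsupp.mem_support_iff, hfp]; exact one_ne_zero
  · rw [← Nat.support_factorization, hfN] at hq; exact (hf q hq).2

/-- For every prime `p` there exists a positive integer `n` such that the
largest prime factor of `g(n)` equals `p`. -/
theorem exists_landau_maxPrimeFactor_eq (p : ℕ) (hp : p.Prime) :
    ∃ n : ℕ, 0 < n ∧ p ∈ (landau n).primeFactors ∧
      ∀ q ∈ (landau n).primeFactors, q ≤ p := by
  rcases hp.two_le.eq_or_lt with rfl | hp3
  · refine ⟨2, two_pos, ?_⟩
    simp [landau_two, Nat.prime_two.primeFactors]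
  · obtain ⟨N, hN, hpN, hNp⟩ := exists_isSuperchampion hp hp3
    refine ⟨primePowerSum N, primePowerSum_pos ⟨p, hpN⟩, ?_⟩
    rw [landau_primePowerSum_of_isSuperchampion hp.pos hN]
    exact ⟨hpN, hNp⟩
end

section
/- Let x be a positive real number, k ≥ 1, and let a_1, …, a_k, b_1, …, b_k be real numbers with 0 < b_k ≤ b_{k−1} ≤ … ≤ b_1 ≤ x < a_1 ≤ a_2 ≤ … ≤ a_k. Set Δ = ∑_{i=1}^{k} (a_i − b_i). Then (x + Δ)/x ≤ ∏_{i=1}^{k} a_i/b_i ≤ exp(Δ/b_k). -/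
/-!
Write `a i / b i = 1 + (a i - b i) / b i`; the ordering makes every difference `a i - b i`
nonnegative and puts every `b i` in `[b k, x]`. Shrinking the denominators `b i` to `x` and applying
the Weierstrass product inequality `1 + ∑ tᵢ ≤ ∏ (1 + tᵢ)` gives the lower bound; enlarging them to
`b k` and applying `1 + t ≤ exp t` factorwise gives the upper bound.
-/

open Finset Real

theorem Finset.one_add_sum_le_prod_one_add {ι R : Type*} [CommSemiring R] [PartialOrder R]
    [IsOrderedRing R] (s : Finset ι) {f : ι → R} (hf : ∀ i ∈ s, 0 ≤ f i) :
    1 + ∑ i ∈ s, f i ≤ ∏ i ∈ s, (1 + f i) := by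
  induction s using Finset.cons_induction with
  | empty => simp
  | cons j s _ ih =>
    rw [sum_cons, prod_cons]
    have hfj : 0 ≤ f j := hf j (mem_cons_self j s)
    have hfs : ∀ i ∈ s, 0 ≤ f i := fun i hi => hf i (mem_cons_of_mem hi)
    calc 1 + (f j + ∑ i ∈ s, f i)
        ≤ 1 + (f j + ∑ i ∈ s, f i) + f j * ∑ i ∈ s, f i :=
          le_add_of_nonneg_right (mul_nonneg hfj (sum_nonneg hfs))
      _ = (1 + f j) * (1 + ∑ i ∈ s, f i) := by ring
      _ ≤ (1 + f j) * ∏ i ∈ s, (1 + f i) :=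
          mul_le_mul_of_nonneg_left (ih hfs) (add_nonneg zero_le_one hfj)

section Ratios

variable {ι : Type*} (s : Finset ι) {a b : ι → ℝ}

theorem add_sum_sub_div_le_prod_div {x : ℝ} (hx : 0 < x) (hb : ∀ i ∈ s, 0 < b i)
    (hbx : ∀ i ∈ s, b i ≤ x) (hba : ∀ i ∈ s, b i ≤ a i) :
    (x + ∑ i ∈ s, (a i - b i)) / x ≤ ∏ i ∈ s, a i / b i := by
  have hd : ∀ i ∈ s, 0 ≤ a i - b i := fun i hi => sub_nonneg.2 (hba i hi)
  calc (x + ∑ i ∈ s, (a i - b i)) / x = 1 + ∑ i ∈ s, (a i - b i) / x := by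
        rw [add_div, div_self hx.ne', sum_div]
    _ ≤ ∏ i ∈ s, (1 + (a i - b i) / x) :=
        one_add_sum_le_prod_one_add s fun i hi => div_nonneg (hd i hi) hx.le
    _ ≤ ∏ i ∈ s, (1 + (a i - b i) / b i) :=
        prod_le_prod (fun i hi => add_nonneg zero_le_one (div_nonneg (hd i hi) hx.le))
          fun i hi => add_le_add_right (div_le_div_of_nonneg_left (hd i hi) (hb i hi) (hbx i hi)) 1
    _ = ∏ i ∈ s, a i / b i := prod_congr rfl fun i hi => by
        rw [div_sub_same (hb i hi).ne', add_sub_cancel]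

theorem prod_div_le_exp_sum_sub_div {c : ℝ} (hc : 0 < c) (hcb : ∀ i ∈ s, c ≤ b i)
    (hba : ∀ i ∈ s, b i ≤ a i) :
    ∏ i ∈ s, a i / b i ≤ exp ((∑ i ∈ s, (a i - b i)) / c) := by
  rw [sum_div, exp_sum]
  refine prod_le_prod (fun i hi => ?_) fun i hi => ?_
  · have hbi : 0 < b i := hc.trans_le (hcb i hi)
    exact div_nonneg (hbi.le.trans (hba i hi)) hbi.le
  · calc a i / b i = 1 + (a i - b i) / b i := by
          rw [div_sub_same (hc.trans_le (hcb i hi)).ne', add_sub_cancel]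
      _ ≤ 1 + (a i - b i) / c := by
          gcongr
          · exact sub_nonneg.2 (hba i hi)
          · exact hcb i hi
      _ ≤ exp ((a i - b i) / c) := by linarith [add_one_le_exp ((a i - b i) / c)]

end Ratios

theorem prod_ratio_bounds_general (x : ℝ) (hx : 0 < x) (k : ℕ) (a b : ℕ → ℝ)
    (hbk : 0 < b k)
    (hb : ∀ i, 1 ≤ i → i < k → b (i + 1) ≤ b i)
    (hb1 : b 1 ≤ x) (ha1 : x < a 1)
    (ha : ∀ i, 1 ≤ i → i < k → a i ≤ a (i + 1)) :
    (x + ∑ i ∈ Finset.Icc 1 k, (a i - b i)) / x ≤ ∏ i ∈ Finset.Icc 1 k, a i / b i ∧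
      ∏ i ∈ Finset.Icc 1 k, a i / b i ≤
        Real.exp ((∑ i ∈ Finset.Icc 1 k, (a i - b i)) / b k) := by
  have hb_anti : AntitoneOn b (Icc 1 k : Set ℕ) := by
    rw [coe_Icc]
    exact antitoneOn_of_add_one_le Set.ordConnected_Icc fun i _ hi hi' => hb i hi.1 hi'.2
  have ha_mono : MonotoneOn a (Icc 1 k : Set ℕ) := by
    rw [coe_Icc]
    exact monotoneOn_of_le_add_one Set.ordConnected_Icc fun i _ hi hi' => ha i hi.1 hi'.2
  have hbk_le : ∀ i ∈ Icc 1 k, b k ≤ b i := fun i hi =>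
    hb_anti hi (right_mem_Icc.2 (nonempty_Icc.1 ⟨i, hi⟩)) (mem_Icc.1 hi).2
  have hb_le_x : ∀ i ∈ Icc 1 k, b i ≤ x := fun i hi =>
    (hb_anti (left_mem_Icc.2 (nonempty_Icc.1 ⟨i, hi⟩)) hi (mem_Icc.1 hi).1).trans hb1
  have hba : ∀ i ∈ Icc 1 k, b i ≤ a i := fun i hi =>
    (hb_le_x i hi).trans <| ha1.le.trans <|
      ha_mono (left_mem_Icc.2 (nonempty_Icc.1 ⟨i, hi⟩)) hi (mem_Icc.1 hi).1
  exact ⟨add_sum_sub_div_le_prod_div _ hx (fun i hi => hbk.trans_le (hbk_le i hi)) hb_le_x hba,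
    prod_div_le_exp_sum_sub_div _ hbk hbk_le hba⟩

/-- Let `x > 0`, `k ≥ 1` and
`0 < b_k ≤ b_{k-1} ≤ ⋯ ≤ b_1 ≤ x < a_1 ≤ a_2 ≤ ⋯ ≤ a_k`. With
`Δ = ∑_{i=1}^k (a_i - b_i)`, one has `(x + Δ)/x ≤ ∏_{i=1}^k a_i/b_i ≤ exp(Δ/b_k)`. -/
theorem prod_ratio_bounds (x : ℝ) (hx : 0 < x) (k : ℕ) (hk : 1 ≤ k) (a b : ℕ → ℝ)
    (hbk : 0 < b k)
    (hb : ∀ i, 1 ≤ i → i < k → b (i + 1) ≤ b i)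
    (hb1 : b 1 ≤ x) (ha1 : x < a 1)
    (ha : ∀ i, 1 ≤ i → i < k → a i ≤ a (i + 1)) :
    (x + ∑ i ∈ Finset.Icc 1 k, (a i - b i)) / x ≤ ∏ i ∈ Finset.Icc 1 k, a i / b i ∧
      ∏ i ∈ Finset.Icc 1 k, a i / b i ≤
        Real.exp ((∑ i ∈ Finset.Icc 1 k, (a i - b i)) / b k) :=
  prod_ratio_bounds_general x hx k a b hbk hb hb1 ha1 ha
end

section
/- Let ρ > 2/log 2 and let x > 4 be the unique real with ρ = x/log x. Then for every prime p ≤ x the exponent α_p of p in N_ρ satisfies p^{α_p} ≤ x; consequently N_ρ divides the least common multiple of the integers 1, 2, …, ⌊x⌋. -/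
/-- The additive function `ℓ` with `ℓ(1) = 0` and `ℓ(p^k) = p^k` for primes `p` and `k ≥ 1`. -/
def ell (M : ℕ) : ℕ := ∑ p ∈ M.primeFactors, p ^ M.factorization p

/-- `(ℓ(p^k) - ℓ(p^{k-1})) / log p`, the cost of raising the exponent of `p` from `k-1` to `k`. -/
noncomputable def ellCost (p k : ℕ) : ℝ :=
  ((ell (p ^ k) : ℝ) - (ell (p ^ (k - 1)) : ℝ)) / Real.log p

/-- The exponent `α_p` of the prime `p` in `N_ρ`, where `ρ = x / log x`:
`α_p = 0` for `p > x`, and otherwise `α_p` is the (largest) `k ≥ 1` with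
`(p^k - p^{k-1})/log p ≤ ρ < (p^{k+1} - p^k)/log p` (here `p^1 - p^0` is to be read as `p`,
i.e. as `ℓ(p^1) - ℓ(p^0)`). -/
noncomputable def alphaExp (x : ℝ) (p : ℕ) : ℕ :=
  if (p : ℝ) ≤ x then sSup {k : ℕ | 1 ≤ k ∧ ellCost p k ≤ x / Real.log x} else 0

/-- Ramanujan's superior champion `N_ρ = ∏_{p ≤ x} p^{α_p}`, with `ρ = x / log x`. -/
noncomputable def Nrho (x : ℝ) : ℕ :=
  ∏ p ∈ (Finset.range (⌊x⌋₊ + 1)).filter Nat.Prime, p ^ alphaExp x p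

/-!
Raising the exponent of `p` from `k - 1 ≥ 1` to `k` costs `(p^k - p^(k-1)) / log p`, which
exceeds `p^k / log p^k` as soon as `p < k (p - 1)`, i.e. unless `p^k = 4`. Since `t / log t`
increases beyond `e`, a cost at most `x / log x` therefore forces `p^k ≤ x`. Hence every
`p^{α_p}` lies in `[1, ⌊x⌋]` and divides the lcm, and so does their coprime product `N_ρ`.
-/

open Function Real

lemma ell_prime_pow {p k : ℕ} (hp : p.Prime) (hk : k ≠ 0) : ell (p ^ k) = p ^ k := by
  rw [ell, Nat.primeFactors_prime_pow hk hp, Finset.sum_singleton, hp.factorization_pow,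
    Finsupp.single_eq_same]

lemma ellCost_prime_pow {p k : ℕ} (hp : p.Prime) (hk : 2 ≤ k) :
    ellCost p k = ((p : ℝ) ^ k - (p : ℝ) ^ (k - 1)) / log p := by
  rw [ellCost, ell_prime_pow hp (by omega), ell_prime_pow hp (by omega)]
  push_cast
  rfl

lemma lt_mul_sub_one_of_four_lt_pow {p k : ℕ} (hp : 2 ≤ p) (hk : 2 ≤ k) (h4 : 4 < p ^ k) :
    p < k * (p - 1) := by
  obtain rfl | hk3 := hk.eq_or_lt
  · have : 2 < p := by
      by_contra! hp2
      obtain rfl : p = 2 := by omega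
      norm_num at h4
    omega
  · nlinarith [Nat.sub_add_cancel (one_le_two.trans hp)]

lemma pow_div_log_pow_lt_ellCost {p k : ℕ} (hp : p.Prime) (hk : 2 ≤ k) (h4 : 4 < p ^ k) :
    (p : ℝ) ^ k / log ((p : ℝ) ^ k) < ellCost p k := by
  have hlogp : 0 < log p := log_pos (by exact_mod_cast hp.one_lt)
  have hkp : (p : ℝ) < k * (p - 1) := by
    rw [← Nat.cast_pred hp.pos]
    exact_mod_cast lt_mul_sub_one_of_four_lt_pow hp.two_le hk h4
  have hpow : (p : ℝ) ^ k = p * p ^ (k - 1) := by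
    rw [← pow_succ']; congr 1; omega
  have hk0 : (0 : ℝ) < k := by exact_mod_cast (two_pos.trans_le hk)
  rw [ellCost_prime_pow hp hk, log_pow, div_lt_div_iff₀ (mul_pos hk0 hlogp) hlogp, hpow]
  have : (0 : ℝ) < p ^ (k - 1) := pow_pos (by exact_mod_cast hp.pos) _
  nlinarith [mul_pos (mul_pos this hlogp) (sub_pos.2 hkp)]

lemma div_log_le_div_log {x y : ℝ} (hx : exp 1 ≤ x) (hxy : x ≤ y) :
    x / log x ≤ y / log y := by
  have hx0 : 0 < x := (exp_pos 1).trans_le hx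
  have hlogx : 0 < log x := log_pos (by linarith [add_one_le_exp 1])
  have hlogy : 0 < log y := log_pos (by linarith [add_one_le_exp 1])
  have := log_div_self_antitoneOn hx (hx.trans hxy) hxy
  rw [div_le_div_iff₀ (hx0.trans_le hxy) hx0] at this
  rw [div_le_div_iff₀ hlogx hlogy]
  linarith

lemma pow_le_of_ellCost_le {p k : ℕ} (hp : p.Prime) (hk : 2 ≤ k) {x : ℝ} (hx : 4 ≤ x)
    (h : ellCost p k ≤ x / log x) : (p : ℝ) ^ k ≤ x := by
  by_contra! hlt
  have h4 : 4 < p ^ k := by exact_mod_cast hx.trans_lt hlt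
  have he : exp 1 ≤ x := by linarith [exp_one_lt_d9]
  have := div_log_le_div_log he hlt.le
  linarith [pow_div_log_pow_lt_ellCost hp hk h4]

lemma Nat.sSup_eq_zero_or_mem (s : Set ℕ) : sSup s = 0 ∨ sSup s ∈ s := by
  by_cases hb : BddAbove s
  · rcases s.eq_empty_or_nonempty with rfl | hne
    · exact .inl csSup_empty
    · exact .inr (Nat.sSup_mem hne hb)
  · exact .inl (Nat.sSup_of_not_bddAbove hb)

lemma pow_alphaExp_le {p : ℕ} (hp : p.Prime) {x : ℝ} (hx : 4 ≤ x) :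
    (p : ℝ) ^ alphaExp x p ≤ x := by
  rw [alphaExp]
  split_ifs with hpx
  · rcases Nat.sSup_eq_zero_or_mem {k : ℕ | 1 ≤ k ∧ ellCost p k ≤ x / log x}
      with h0 | ⟨hk1, hcost⟩
    · rw [h0, pow_zero]; linarith
    · obtain h1 | hk2 := hk1.eq_or_lt
      · rwa [← h1, pow_one]
      · exact pow_le_of_ellCost_le hp hk2 hx hcost
  · rw [pow_zero]; linarith

lemma Nat.prod_dvd_of_pairwise_coprime {ι : Type*} {t : Finset ι} {s : ι → ℕ} {n : ℕ}
    (hs : (t : Set ι).Pairwise (Nat.Coprime on s)) (h : ∀ i ∈ t, s i ∣ n) :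
    ∏ i ∈ t, s i ∣ n := by
  have := Finset.prod_dvd_of_coprime (z := (n : ℤ)) (s := fun i ↦ (s i : ℤ))
    (fun i hi j hj hij ↦ Nat.isCoprime_iff_coprime.2 (hs hi hj hij))
    (fun i hi ↦ Int.natCast_dvd_natCast.2 (h i hi))
  exact_mod_cast this

theorem Nrho_primePow_le_and_dvd_lcm_general (x : ℝ) (hx : 4 < x) :
    (∀ p : ℕ, p.Prime → (p : ℝ) ≤ x → (p : ℝ) ^ alphaExp x p ≤ x) ∧
      Nrho x ∣ (Finset.Icc 1 ⌊x⌋₊).lcm id := by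
  refine ⟨fun p hp _ ↦ pow_alphaExp_le hp hx.le, ?_⟩
  refine Nat.prod_dvd_of_pairwise_coprime (fun p hp q hq hpq ↦ ?_) fun p hp ↦ ?_
  · exact Nat.coprime_pow_primes _ _ (Finset.mem_filter.1 hp).2 (Finset.mem_filter.1 hq).2 hpq
  · obtain ⟨-, hp⟩ := Finset.mem_filter.1 hp
    refine Finset.dvd_lcm (Finset.mem_Icc.2 ⟨Nat.one_le_iff_ne_zero.2 (pow_ne_zero _ hp.ne_zero),
      Nat.le_floor ?_⟩)
    exact_mod_cast pow_alphaExp_le hp hx.le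

/-- For `ρ > 2/log 2` and `x > 4` with `ρ = x/log x`, every prime `p ≤ x`
satisfies `p^{α_p} ≤ x`; consequently `N_ρ` divides `lcm(1, 2, …, ⌊x⌋)`. -/
theorem Nrho_primePow_le_and_dvd_lcm (ρ x : ℝ)
    (hρ : 2 / Real.log 2 < ρ) (hx : 4 < x) (hρx : ρ = x / Real.log x) :
    (∀ p : ℕ, p.Prime → (p : ℝ) ≤ x → (p : ℝ) ^ alphaExp x p ≤ x) ∧
      Nrho x ∣ (Finset.Icc 1 ⌊x⌋₊).lcm id :=
  Nrho_primePow_le_and_dvd_lcm_general x hx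
end

section
/- Define f(d) = ∏_{p | d, p > 2} (p − 1)/(p − 2), the product being over the odd prime divisors p of d (empty product equal to 1). Then for every real x ≥ 1, ∑_{1 ≤ n ≤ x} f(n)² ≤ (8/3)·x. -/
/-!
Write `f(n)² = ∏_{p ∣ n} (1 + w(p))` with `w(2) = 0` and `w(p) = (2p - 3)/(p - 2)²` for `p > 2`.
Then `f² = g * ζ`, where `g` is supported on squarefree numbers and `g(d) = ∏_{p ∣ d} w(p)`, so
`∑_{n ≤ x} f(n)² = ∑_{d ≤ x} g(d) ⌊x/d⌋ ≤ x ∑_{d ≤ x} g(d)/d ≤ x ∏_{p ≤ x} (1 + w(p)/p)`.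
The factors with `p ≤ 100` multiply to at most `2.6302`. For a prime `p = 2k + 1 > 100` the factor
is at most `r(k + 1)/r(k)` with `r(k) = (2k - 3)/(2k - 2)`, and this telescopes to at most
`1/r(50) = 98/97`. Finally `2.6302 · 98/97 < 8/3`.
-/

/-- `f(d) = ∏_{p ∣ d, p > 2} (p-1)/(p-2)`, the product over odd prime divisors of `d`. -/
noncomputable def fOdd (d : ℕ) : ℝ :=
  ∏ p ∈ d.primeFactors.filter (fun p => 2 < p), ((p : ℝ) - 1) / ((p : ℝ) - 2)

open Nat Finset ArithmeticFunction
open scoped ArithmeticFunction.zeta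

def squarefreeProd {R : Type*} [CommMonoidWithZero R] (v : ℕ → R) : ArithmeticFunction R :=
  ⟨fun d => if Squarefree d then ∏ p ∈ d.primeFactors, v p else 0, by simp⟩

section General

variable {R : Type*}

theorem squarefreeProd_apply [CommMonoidWithZero R] (v : ℕ → R) (d : ℕ) :
    squarefreeProd v d = if Squarefree d then ∏ p ∈ d.primeFactors, v p else 0 := rfl

theorem sum_divisors_squarefreeProd [CommSemiring R] (v : ℕ → R) {n : ℕ} (hn : n ≠ 0) :
    ∑ d ∈ n.divisors, squarefreeProd v d = ∏ p ∈ n.primeFactors, (1 + v p) := by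
  simp_rw [squarefreeProd_apply, ← sum_filter, sum_divisors_filter_squarefree hn, factors_eq,
    prod_one_add]
  refine sum_congr rfl fun t ht => ?_
  rw [prod_val]
  exact congrArg (∏ p ∈ ·, v p)
    (primeFactors_prod fun p hp => prime_of_mem_primeFactors (mem_powerset.mp ht hp))

theorem squarefreeProd_nonneg [CommMonoidWithZero R] [PartialOrder R] [ZeroLEOneClass R]
    [PosMulMono R] {v : ℕ → R} (hv : ∀ p, 0 ≤ v p) (d : ℕ) : 0 ≤ squarefreeProd v d := by
  rw [squarefreeProd_apply]
  split_ifs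
  exacts [prod_nonneg fun p _ => hv p, le_rfl]

theorem squarefreeProd_div_natCast [Semifield R] (v : ℕ → R) (d : ℕ) :
    squarefreeProd v d / d = squarefreeProd (fun p => v p / p) d := by
  rw [squarefreeProd_apply, squarefreeProd_apply]
  split_ifs with hd
  · rw [prod_div_distrib, ← cast_prod, prod_primeFactors_of_squarefree hd]
  · exact zero_div _

theorem sum_Ioc_squarefreeProd_le_prod_primesLE [CommSemiring R] [PartialOrder R]
    [IsOrderedRing R] {v : ℕ → R} (hv : ∀ p, 0 ≤ v p) (N : ℕ) :
    ∑ d ∈ Ioc 0 N, squarefreeProd v d ≤ ∏ p ∈ primesLE N, (1 + v p) := by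
  have hdvd : ∀ d ∈ Ioc 0 N, Squarefree d → d ∈ (primorial N).divisors := by
    intro d hd hsq
    rw [mem_divisors, ← prod_primeFactors_of_squarefree hsq, primorial_eq_prod_primesLE]
    refine ⟨prod_dvd_prod_of_subset _ _ _ fun p hp => ?_, (primorial_pos N).ne'⟩
    exact mem_primesLE.mpr ⟨(le_of_mem_primeFactors hp).trans (mem_Ioc.mp hd).2,
      prime_of_mem_primeFactors hp⟩
  calc ∑ d ∈ Ioc 0 N, squarefreeProd v d
      = ∑ d ∈ Ioc 0 N with Squarefree d, squarefreeProd v d :=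
        (sum_filter_of_ne fun d _ hd => by_contra fun hsq => hd (if_neg hsq)).symm
    _ ≤ ∑ d ∈ (primorial N).divisors, squarefreeProd v d :=
        sum_le_sum_of_subset_of_nonneg
          (fun d hd => hdvd d (mem_filter.mp hd).1 (mem_filter.mp hd).2)
          fun d _ _ => squarefreeProd_nonneg hv d
    _ = ∏ p ∈ primesLE N, (1 + v p) := by
        rw [sum_divisors_squarefreeProd v (primorial_pos N).ne', primeFactors_primorial]

theorem sum_Ioc_mul_zeta_le [Semifield R] [LinearOrder R] [IsStrictOrderedRing R]
    {g : ArithmeticFunction R} (hg : ∀ d, 0 ≤ g d) (N : ℕ) :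
    ∑ n ∈ Ioc 0 N, (g * ζ) n ≤ N * ∑ d ∈ Ioc 0 N, g d / d := by
  rw [sum_Ioc_mul_zeta_eq_sum, mul_sum]
  refine sum_le_sum fun d _ => ?_
  calc g d * ((N / d : ℕ) : R) ≤ g d * (N / d) := mul_le_mul_of_nonneg_left cast_div_le (hg d)
    _ = N * (g d / d) := by ring

theorem prod_Ico_div₀ [CommGroupWithZero R] {f : ℕ → R} {m n : ℕ}
    (hf : ∀ k, m ≤ k → f k ≠ 0) (hmn : m ≤ n) :
    ∏ k ∈ Ico m n, f (k + 1) / f k = f n / f m := by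
  induction n, hmn using Nat.le_induction with
  | base => rw [Ico_self, prod_empty, div_self (hf m le_rfl)]
  | succ n hmn ih =>
    rw [prod_Ico_succ_top hmn, ih, mul_comm, div_mul_div_cancel₀ (hf n hmn)]

end General

noncomputable def fOddWeight (p : ℕ) : ℝ :=
  if 2 < p then (2 * (p : ℝ) - 3) / ((p : ℝ) - 2) ^ 2 else 0

theorem fOddWeight_nonneg (p : ℕ) : 0 ≤ fOddWeight p := by
  unfold fOddWeight
  split_ifs with hp
  · have : (2 : ℝ) < p := by exact_mod_cast hp
    exact div_nonneg (by linarith) (sq_nonneg _)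
  · exact le_rfl

theorem fOdd_sq_eq_prod (n : ℕ) : fOdd n ^ 2 = ∏ p ∈ n.primeFactors, (1 + fOddWeight p) := by
  rw [fOdd, ← prod_pow, prod_filter]
  refine prod_congr rfl fun p _ => ?_
  unfold fOddWeight
  split_ifs with hp
  · have : (p : ℝ) - 2 ≠ 0 := sub_ne_zero.mpr (by exact_mod_cast hp.ne')
    field_simp
    ring
  · simp

theorem fOdd_sq_eq_mul_zeta_apply {n : ℕ} (hn : n ≠ 0) :
    fOdd n ^ 2 = (squarefreeProd fOddWeight * ζ) n := by
  rw [coe_mul_zeta_apply, sum_divisors_squarefreeProd _ hn, fOdd_sq_eq_prod]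

theorem one_le_one_add_fOddWeight_div (p : ℕ) : 1 ≤ 1 + fOddWeight p / p :=
  le_add_of_nonneg_right (div_nonneg (fOddWeight_nonneg p) p.cast_nonneg)

noncomputable def oddTailRatio (k : ℕ) : ℝ := (2 * k - 3) / (2 * k - 2)

theorem one_add_fOddWeight_div_le {k : ℕ} (hk : 2 ≤ k) :
    1 + fOddWeight (2 * k + 1) / (2 * k + 1 : ℕ) ≤ oddTailRatio (k + 1) / oddTailRatio k := by
  have hk' : (2 : ℝ) ≤ k := by exact_mod_cast hk
  rw [fOddWeight, if_pos (by omega), oddTailRatio, oddTailRatio]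
  push_cast
  have h1 : (2 * k + 1 - 2 : ℝ) ≠ 0 := by linarith
  have h2 : (2 * k - 3 : ℝ) ≠ 0 := by linarith
  have h3 : (2 * k - 2 : ℝ) ≠ 0 := by linarith
  have h4 : (2 * (k + 1) - 2 : ℝ) ≠ 0 := by linarith
  field_simp
  rw [div_le_div_iff₀ (pow_pos (by linarith) 2) (mul_pos (by linarith) (by linarith))]
  nlinarith

theorem oddTailRatio_pos {k : ℕ} (hk : 2 ≤ k) : 0 < oddTailRatio k := by
  have hk' : (2 : ℝ) ≤ k := by exact_mod_cast hk
  exact div_pos (by linarith) (by linarith)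

theorem oddTailRatio_le_one {k : ℕ} (hk : 2 ≤ k) : oddTailRatio k ≤ 1 := by
  have hk' : (2 : ℝ) ≤ k := by exact_mod_cast hk
  exact (div_le_one (by linarith)).mpr (by linarith)

theorem one_le_oddTailRatio_succ_div {k : ℕ} (hk : 2 ≤ k) :
    1 ≤ oddTailRatio (k + 1) / oddTailRatio k := by
  have hk' : (2 : ℝ) ≤ k := by exact_mod_cast hk
  rw [one_le_div (oddTailRatio_pos hk), oddTailRatio, oddTailRatio,
    div_le_div_iff₀ (by linarith) (by push_cast; linarith)]
  push_cast
  nlinarith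

theorem prod_one_add_fOddWeight_div_le_of_lt {S : Finset ℕ} (hS : ∀ p ∈ S, Odd p ∧ 100 < p) :
    ∏ p ∈ S, (1 + fOddWeight p / p) ≤ 98 / 97 := by
  set K := S.sup id + 50
  have hhalf : ∀ p ∈ S, 2 * (p / 2) + 1 = p := fun p hp => by
    obtain ⟨⟨k, rfl⟩, -⟩ := hS p hp; omega
  have hsub : S.image (· / 2) ⊆ Ico 50 K := by
    intro k hk
    obtain ⟨p, hp, rfl⟩ := mem_image.mp hk
    have : p ≤ S.sup id := le_sup (f := id) hp
    have := (hS p hp).2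
    exact mem_Ico.mpr ⟨by omega, by omega⟩
  calc ∏ p ∈ S, (1 + fOddWeight p / p)
      ≤ ∏ p ∈ S, oddTailRatio (p / 2 + 1) / oddTailRatio (p / 2) := by
        refine prod_le_prod (fun p _ => zero_le_one.trans (one_le_one_add_fOddWeight_div p))
          fun p hp => ?_
        have := one_add_fOddWeight_div_le (k := p / 2) (by have := (hS p hp).2; omega)
        rwa [hhalf p hp] at this
    _ = ∏ k ∈ S.image (· / 2), oddTailRatio (k + 1) / oddTailRatio k := by
        rw [prod_image fun p hp q hq hpq => ?_]
        rw [← hhalf p hp, ← hhalf q hq]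
        exact congrArg (2 * · + 1) hpq
    _ ≤ ∏ k ∈ Ico 50 K, oddTailRatio (k + 1) / oddTailRatio k :=
        prod_le_prod_of_subset_of_one_le hsub
          (fun k hk => zero_le_one.trans (one_le_oddTailRatio_succ_div (by grind)))
          fun k hk _ => one_le_oddTailRatio_succ_div (by grind)
    _ = oddTailRatio K / oddTailRatio 50 :=
        prod_Ico_div₀ (fun k hk => (oddTailRatio_pos (by omega)).ne') (by omega)
    _ ≤ 1 / oddTailRatio 50 :=
        div_le_div_of_nonneg_right (oddTailRatio_le_one (by omega))
          (oddTailRatio_pos (by norm_num)).le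
    _ = 98 / 97 := by norm_num [oddTailRatio]

theorem prod_primesLE_100_one_add_fOddWeight_div_le :
    ∏ p ∈ primesLE 100, (1 + fOddWeight p / p) ≤ 26302 / 10000 := by
  rw [show primesLE 100 = {2, 3, 5, 7, 11, 13, 17, 19, 23, 29, 31, 37, 41, 43, 47, 53, 59, 61, 67,
    71, 73, 79, 83, 89, 97} by decide]
  norm_num [fOddWeight]

theorem prod_one_add_fOddWeight_div_le {S : Finset ℕ} (hS : ∀ p ∈ S, p.Prime) :
    ∏ p ∈ S, (1 + fOddWeight p / p) ≤ 8 / 3 := by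
  have hsmall : ∏ p ∈ S with p ≤ 100, (1 + fOddWeight p / p) ≤ 26302 / 10000 := by
    refine (prod_le_prod_of_subset_of_one_le (fun p hp => ?_) (fun p _ => ?_)
      fun p _ _ => ?_).trans prod_primesLE_100_one_add_fOddWeight_div_le
    · exact mem_primesLE.mpr ⟨(mem_filter.mp hp).2, hS p (mem_filter.mp hp).1⟩
    · exact zero_le_one.trans (one_le_one_add_fOddWeight_div p)
    · exact one_le_one_add_fOddWeight_div p
  have hlarge : ∏ p ∈ S with ¬p ≤ 100, (1 + fOddWeight p / p) ≤ 98 / 97 := by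
    refine prod_one_add_fOddWeight_div_le_of_lt fun p hp => ?_
    obtain ⟨hpS, hp100⟩ := mem_filter.mp hp
    exact ⟨(hS p hpS).odd_of_ne_two (by omega), by omega⟩
  rw [← prod_filter_mul_prod_filter_not S (· ≤ 100)]
  calc _ ≤ (26302 / 10000 : ℝ) * (98 / 97) :=
        mul_le_mul hsmall hlarge (prod_nonneg fun p _ => zero_le_one.trans
          (one_le_one_add_fOddWeight_div p)) (by norm_num)
    _ ≤ 8 / 3 := by norm_num

/-- For every real `x ≥ 1`, `∑_{1 ≤ n ≤ x} f(n)² ≤ (8/3) x`. -/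
theorem sum_sq_fOdd_le (x : ℝ) (hx : 1 ≤ x) :
    ∑ n ∈ Finset.Icc 1 ⌊x⌋₊, (fOdd n) ^ 2 ≤ 8 / 3 * x := by
  set N := ⌊x⌋₊
  have hNx : (N : ℝ) ≤ x := floor_le (by linarith)
  have hw : ∀ p, 0 ≤ fOddWeight p / p := fun p => div_nonneg (fOddWeight_nonneg p) p.cast_nonneg
  calc ∑ n ∈ Icc 1 N, fOdd n ^ 2 = ∑ n ∈ Ioc 0 N, (squarefreeProd fOddWeight * ζ) n :=
        sum_congr (Icc_add_one_left_eq_Ioc 0 N) fun n hn =>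
          fOdd_sq_eq_mul_zeta_apply (one_le_iff_ne_zero.mp (mem_Icc.mp hn).1)
    _ ≤ N * ∑ d ∈ Ioc 0 N, squarefreeProd fOddWeight d / d :=
        sum_Ioc_mul_zeta_le (squarefreeProd_nonneg fOddWeight_nonneg) N
    _ = N * ∑ d ∈ Ioc 0 N, squarefreeProd (fun p => fOddWeight p / p) d := by
        simp_rw [squarefreeProd_div_natCast]
    _ ≤ N * ∏ p ∈ primesLE N, (1 + fOddWeight p / p) :=
        mul_le_mul_of_nonneg_left (sum_Ioc_squarefreeProd_le_prod_primesLE hw N) N.cast_nonneg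
    _ ≤ N * (8 / 3) :=
        mul_le_mul_of_nonneg_left
          (prod_one_add_fOddWeight_div_le fun p hp => prime_of_mem_primesLE hp) N.cast_nonneg
    _ ≤ 8 / 3 * x := by linarith
end

section
/- Assume there exist infinitely many primes p such that p + 2 is also prime. Then, with (n_k) enumerating the points of increase of Landau's function g, one has n_{k+1} − n_k ≤ 2 for infinitely many k. -/
/-- `landauInc n` means `n ≥ 1` is a point of increase of Landau's function. -/
noncomputable def landauInc (n : ℕ) : Prop := 1 ≤ n ∧ landau (n - 1) < landau n

/-- `landauNth k` is the `(k+1)`-st point of increase of Landau's function,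
so that `landauNth 0 = n₁ = 1`, `landauNth 1 = n₂ = 2`, etc. -/
noncomputable def landauNth (k : ℕ) : ℕ := Nat.nth landauInc k

/-!
For `t > 0`, a maximiser `N` of `t log M - ℓ(M)` over `M : ℕ` satisfies `g(ℓ(N)) = N`, and `ℓ(N)`
is a point of increase of `g`, since `g(n)` is the largest `M` with `ℓ(M) ≤ n`. The objective is a
sum of weights `t a log p - p ^ a` over the prime powers `p ^ a ∥ M`. For `t = q / log q`, `q` prime,
the weight vanishes at `p ^ a = q` and is non-positive whenever `p ≥ q`, so a maximiser `N = q R`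
exists with all prime factors of `R` below `q`. If `q + 2` is prime too, `(q + 2) R` has `ℓ` larger
by exactly `2`, so `g(n + 2) > g(n)` for `n = ℓ(N)` and the point of increase after `n` is at most
`n + 2`.
-/

lemma Nat.infinite_setOf_nth_succ_sub_nth_le {P : ℕ → Prop} {d : ℕ}
    (h : ∀ B, ∃ n, B ≤ n ∧ P n ∧ ∃ m, n < m ∧ m ≤ n + d ∧ P m) :
    {k | Nat.nth P (k + 1) - Nat.nth P k ≤ d}.Infinite := by
  classical
  have hinf : (Set.ofPred P).Infinite := Set.infinite_of_forall_exists_gt fun B => by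
    obtain ⟨n, hn, hP, -⟩ := h (B + 1)
    exact ⟨n, hP, by omega⟩
  refine Set.infinite_of_forall_exists_gt fun K => ?_
  obtain ⟨n, hn, hPn, m, hnm, hmn, hPm⟩ := h (Nat.nth P K + 1)
  have hnext : Nat.nth P (Nat.count P n + 1) ≤ m := by
    rw [← Nat.count_succ_eq_succ_count hPn, Nat.nth_count_eq_sInf]
    exact Nat.sInf_le ⟨hPm, hnm⟩
  refine ⟨Nat.count P n, ?_, ?_⟩
  · show Nat.nth P (Nat.count P n + 1) - Nat.nth P (Nat.count P n) ≤ d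
    rw [Nat.nth_count hPn]
    omega
  · rw [← Nat.nth_lt_nth hinf, Nat.nth_count hPn]
    omega

namespace LandauGap

open Finset

def primePowCost (p k : ℕ) : ℕ := if k = 0 then 0 else p ^ k

@[simp] lemma primePowCost_zero (p : ℕ) : primePowCost p 0 = 0 := rfl

lemma primePowCost_of_ne_zero {k : ℕ} (p : ℕ) (hk : k ≠ 0) : primePowCost p k = p ^ k := if_neg hk

lemma primePowCost_max_le (p a b : ℕ) :
    primePowCost p (max a b) ≤ primePowCost p a + primePowCost p b := by
  rcases le_total a b with h | h <;> simp [h]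

noncomputable def ell (M : ℕ) : ℕ := M.factorization.sum primePowCost

@[simp] lemma ell_zero : ell 0 = 0 := by simp [ell]

lemma ell_eq_sum_primeFactors (M : ℕ) : ell M = ∑ p ∈ M.primeFactors, p ^ M.factorization p := by
  rw [ell, Finsupp.sum, Nat.support_factorization]
  exact sum_congr rfl fun p hp =>
    primePowCost_of_ne_zero p (Finsupp.mem_support_iff.mp (by rwa [Nat.support_factorization]))

lemma ell_prime_pow {p k : ℕ} (hp : p.Prime) (hk : k ≠ 0) : ell (p ^ k) = p ^ k := by
  rw [ell, hp.factorization_pow, Finsupp.sum_single_index rfl, primePowCost_of_ne_zero _ hk]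

lemma ell_prime {p : ℕ} (hp : p.Prime) : ell p = p := by
  simpa using ell_prime_pow hp one_ne_zero

lemma ell_mul_of_coprime {a b : ℕ} (hab : a.Coprime b) : ell (a * b) = ell a + ell b := by
  rw [ell, Nat.factorization_mul_of_coprime hab,
    Finsupp.sum_add_index_of_disjoint hab.disjoint_primeFactors]
  rfl

lemma ell_le_self (M : ℕ) : ell M ≤ M := by
  induction M using Nat.recOnPosPrimePosCoprime with
  | prime_pow p k hp hk => exact (ell_prime_pow hp hk.ne').le
  | zero => simp
  | one => simp [ell]
  | coprime a b ha hb hab iha ihb =>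
    rw [ell_mul_of_coprime hab]
    nlinarith

lemma ell_lcm_le (a b : ℕ) : ell (a.lcm b) ≤ ell a + ell b := by
  rcases eq_or_ne a 0 with rfl | ha
  · simp
  rcases eq_or_ne b 0 with rfl | hb
  · simp
  classical
  have hsub (c : ℕ) (hc : c ∣ a.lcm b) : c.factorization.support ⊆ (a.lcm b).primeFactors := by
    rw [Nat.support_factorization]; exact Nat.primeFactors_mono hc (Nat.lcm_ne_zero ha hb)
  rw [ell, ell, ell, Finsupp.sum_of_support_subset _ (hsub a (Nat.dvd_lcm_left a b)) _ (by simp),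
    Finsupp.sum_of_support_subset _ (hsub b (Nat.dvd_lcm_right a b)) _ (by simp),
    Finsupp.sum, Nat.support_factorization, ← sum_add_distrib]
  refine sum_le_sum fun p _ => ?_
  rw [Nat.factorization_lcm ha hb]
  exact primePowCost_max_le p _ _

lemma ell_multiset_lcm_le_sum (s : Multiset ℕ) : ell s.lcm ≤ s.sum := by
  induction s using Multiset.induction_on with
  | empty => simp [ell]
  | cons a s ih =>
    rw [Multiset.lcm_cons, lcm_eq_nat_lcm, Multiset.sum_cons]
    exact (ell_lcm_le a s.lcm).trans (add_le_add (ell_le_self a) ih)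

lemma ell_orderOf_le {n : ℕ} (σ : Equiv.Perm (Fin n)) : ell (orderOf σ) ≤ n := by
  rw [← Equiv.Perm.lcm_cycleType]
  exact (ell_multiset_lcm_le_sum _).trans (by simpa using σ.sum_cycleType_le)

lemma lcm_primeFactors_pow_factorization {L : ℕ} (hL : L ≠ 0) :
    L.primeFactors.lcm (fun p => p ^ L.factorization p) = L := by
  rw [Finset.lcm_eq_prod]
  · exact Nat.prod_factorization_pow_eq_self hL
  · intro p hp r hr hpr
    exact Nat.coprime_pow_primes _ _ (Nat.prime_of_mem_primeFactors hp)
      (Nat.prime_of_mem_primeFactors hr) hpr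

lemma exists_orderOf_eq_landau (n : ℕ) : ∃ σ : Equiv.Perm (Fin n), orderOf σ = landau n := by
  obtain ⟨σ, -, hσ⟩ := exists_mem_eq_sup univ univ_nonempty fun σ : Equiv.Perm (Fin n) => orderOf σ
  exact ⟨σ, hσ.symm⟩

lemma ell_landau_le (n : ℕ) : ell (landau n) ≤ n := by
  obtain ⟨σ, hσ⟩ := exists_orderOf_eq_landau n
  exact hσ ▸ ell_orderOf_le σ

lemma le_landau {n L : ℕ} (hL : L ≠ 0) (h : ell L ≤ n) : L ≤ landau n := by
  obtain ⟨σ, hσ⟩ : ∃ σ : Equiv.Perm (Fin n),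
      σ.cycleType = L.primeFactors.val.map fun p => p ^ L.factorization p := by
    refine (Equiv.Perm.exists_with_cycleType_iff (α := Fin n)).mpr ⟨?_, ?_⟩
    · simpa [ell_eq_sum_primeFactors] using h
    · simp only [Multiset.mem_map]
      rintro _ ⟨p, hp, rfl⟩
      exact (Nat.prime_of_mem_primeFactors hp).two_le.trans
        (Nat.le_self_pow (Finsupp.mem_support_iff.mp (by rwa [Nat.support_factorization])) p)
  calc L = orderOf σ := by
        rw [← σ.lcm_cycleType, hσ, ← Finset.lcm_def, lcm_primeFactors_pow_factorization hL]
    _ ≤ landau n := le_sup (f := fun σ : Equiv.Perm (Fin n) => orderOf σ) (mem_univ σ)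

lemma landau_pos (n : ℕ) : 0 < landau n :=
  le_landau one_ne_zero (by simp [ell])

lemma exists_landauInc_of_landau_lt {a b : ℕ} (hab : a ≤ b) (h : landau a < landau b) :
    ∃ m, a < m ∧ m ≤ b ∧ landauInc m := by
  induction b, hab using Nat.le_induction with
  | base => exact absurd h (lt_irrefl _)
  | succ b hab ih =>
    by_cases hb : landau a < landau b
    · obtain ⟨m, ham, hmb, hm⟩ := ih hb
      exact ⟨m, ham, hmb.trans b.le_succ, hm⟩
    · exact ⟨b + 1, by omega, le_rfl, by omega, by simpa using (not_lt.mp hb).trans_lt h⟩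

noncomputable def weight (t : ℝ) (p k : ℕ) : ℝ := t * (k * Real.log p) - primePowCost p k

def IsSuperchampion (t : ℝ) (N : ℕ) : Prop :=
  ∀ M : ℕ, t * Real.log M - ell M ≤ t * Real.log N - ell N

lemma log_sub_ell_eq_sum_weight (t : ℝ) (M : ℕ) :
    t * Real.log M - ell M = M.factorization.sum (weight t) := by
  rw [Real.log_nat_eq_sum_factorization, ell, Nat.cast_finsupp_sum, Finsupp.mul_sum,
    ← Finsupp.sum_sub]
  rfl

lemma isSuperchampion_of_forall_weight_le {t : ℝ} {N : ℕ}
    (h : ∀ p k, p.Prime → weight t p k ≤ weight t p (N.factorization p)) :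
    IsSuperchampion t N := by
  classical
  intro M
  have hM : M.factorization.support ⊆ M.primeFactors ∪ N.primeFactors := by
    rw [Nat.support_factorization]; exact subset_union_left
  have hN : N.factorization.support ⊆ M.primeFactors ∪ N.primeFactors := by
    rw [Nat.support_factorization]; exact subset_union_right
  rw [log_sub_ell_eq_sum_weight, log_sub_ell_eq_sum_weight,
    Finsupp.sum_of_support_subset _ hM _ (by simp [weight]),
    Finsupp.sum_of_support_subset _ hN _ (by simp [weight])]
  refine sum_le_sum fun p hp => h p _ ?_
  rcases mem_union.mp hp with hp | hp <;> exact Nat.prime_of_mem_primeFactors hp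

namespace IsSuperchampion

variable {t : ℝ} {N M : ℕ}

lemma le_of_ell_le (hN : IsSuperchampion t N) (ht : 0 < t) (hN0 : N ≠ 0) (hM0 : M ≠ 0)
    (h : ell M ≤ ell N) : M ≤ N := by
  have hlog : t * Real.log M ≤ t * Real.log N := by
    have := hN M
    have : (ell M : ℝ) ≤ ell N := by exact_mod_cast h
    linarith
  exact_mod_cast (Real.log_le_log_iff (by positivity) (by positivity)).mp
    (le_of_mul_le_mul_left hlog ht)

lemma lt_of_ell_lt (hN : IsSuperchampion t N) (ht : 0 < t) (hN0 : N ≠ 0) (hM0 : M ≠ 0)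
    (h : ell M < ell N) : M < N := by
  have hlog : t * Real.log M < t * Real.log N := by
    have := hN M
    have : (ell M : ℝ) < ell N := by exact_mod_cast h
    linarith
  exact_mod_cast (Real.log_lt_log_iff (by positivity) (by positivity)).mp
    (lt_of_mul_lt_mul_left hlog ht.le)

lemma landau_ell (hN : IsSuperchampion t N) (ht : 0 < t) (hN0 : N ≠ 0) : landau (ell N) = N :=
  le_antisymm (hN.le_of_ell_le ht hN0 (landau_pos _).ne' (ell_landau_le _))
    (le_landau hN0 le_rfl)

lemma landauInc_ell (hN : IsSuperchampion t N) (ht : 0 < t) (hN0 : N ≠ 0) (h : ell N ≠ 0) :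
    landauInc (ell N) := by
  refine ⟨Nat.one_le_iff_ne_zero.mpr h, ?_⟩
  rw [hN.landau_ell ht hN0]
  exact hN.lt_of_ell_lt ht hN0 (landau_pos _).ne' ((ell_landau_le _).trans_lt (by omega))

end IsSuperchampion

lemma weight_nonpos_of_two_mul_le {t : ℝ} {p k : ℕ} (hp : 1 < p) (hk : 2 * t ≤ k * Real.log p) :
    weight t p k ≤ 0 := by
  rcases eq_or_ne k 0 with rfl | hk0
  · simp [weight]
  have hx : 0 ≤ k * Real.log p := by positivity
  have hpow : (p : ℝ) ^ k = Real.exp (k * Real.log p) := by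
    rw [Real.exp_nat_mul, Real.exp_log (by positivity)]
  rw [weight, primePowCost_of_ne_zero _ hk0]
  push_cast
  nlinarith [Real.quadratic_le_exp_of_nonneg hx]

lemma exists_forall_weight_le (t : ℝ) {p : ℕ} (hp : 1 < p) :
    ∃ e, ∀ k, weight t p k ≤ weight t p e := by
  set B := ⌈2 * t / Real.log p⌉₊
  obtain ⟨e, -, he⟩ := (range (B + 1)).exists_max_image (weight t p) ⟨0, by simp⟩
  refine ⟨e, fun k => ?_⟩
  by_cases hk : k ∈ range (B + 1)
  · exact he k hk
  have hlog : 0 < Real.log p := Real.log_pos (by exact_mod_cast hp)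
  have hBk : 2 * t / Real.log p ≤ k :=
    (Nat.le_ceil _).trans (by exact_mod_cast (by simpa using hk : B + 1 ≤ k).trans' B.le_succ)
  calc weight t p k ≤ 0 := weight_nonpos_of_two_mul_le hp ((div_le_iff₀ hlog).mp hBk)
    _ = weight t p 0 := by simp [weight]
    _ ≤ weight t p e := he 0 (by simp)

lemma weight_nonpos_of_le {q p : ℕ} (hq : 3 ≤ q) (hqp : q ≤ p) (k : ℕ) :
    weight (q / Real.log q) p k ≤ 0 := by
  rcases eq_or_ne k 0 with rfl | hk
  · simp [weight]
  have hq1 : (1 : ℝ) < q := by exact_mod_cast (by omega : 1 < q)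
  have hqp' : (q : ℝ) ≤ p := by exact_mod_cast hqp
  have he : Real.exp 1 ≤ q := by
    have : (3 : ℝ) ≤ q := by exact_mod_cast hq
    linarith [Real.exp_one_lt_d9]
  have hanti : Real.log p / p ≤ Real.log q / q :=
    Real.log_div_self_antitoneOn he (he.trans hqp') hqp'
  have hlogp : q / Real.log q * Real.log p ≤ p := by
    rw [div_le_div_iff₀ (by linarith) (by linarith)] at hanti
    rw [div_mul_eq_mul_div, div_le_iff₀ (Real.log_pos hq1)]
    linarith
  have hpow : ((p * k : ℕ) : ℝ) ≤ (p ^ k : ℕ) := by exact_mod_cast Nat.mul_le_pow (by omega) k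
  rw [weight, primePowCost_of_ne_zero _ hk]
  push_cast at hpow ⊢
  have hk0 : (0 : ℝ) ≤ k := k.cast_nonneg
  nlinarith

lemma weight_self_one {q : ℕ} (hq : 2 ≤ q) : weight (q / Real.log q) q 1 = 0 := by
  have : Real.log q ≠ 0 := (Real.log_pos (by exact_mod_cast (by omega : 1 < q))).ne'
  simp [weight, primePowCost, this]

lemma factorization_prod_pow_apply {s : Finset ℕ} (hs : ∀ p ∈ s, p.Prime) (e : ℕ → ℕ) (r : ℕ) :
    (∏ p ∈ s, p ^ e p).factorization r = if r ∈ s then e r else 0 := by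
  rw [Nat.factorization_prod_apply fun p hp => pow_ne_zero _ (hs p hp).ne_zero,
    sum_congr rfl fun p hp => by rw [(hs p hp).factorization_pow, Finsupp.single_apply]]
  simp

lemma exists_isSuperchampion_prime_mul {q : ℕ} (hq : q.Prime) (hq3 : 3 ≤ q) :
    ∃ R, R ≠ 0 ∧ (∀ p, p.Prime → p ∣ R → p < q) ∧
      IsSuperchampion (q / Real.log q) (q * R) := by
  choose! e he using fun p (hp : p ∈ q.primesBelow) =>
    exists_forall_weight_le (q / Real.log q) (Nat.prime_of_mem_primesBelow hp).one_lt
  have hs : ∀ p ∈ q.primesBelow, p.Prime := fun p hp => Nat.prime_of_mem_primesBelow hp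
  have hR0 : ∏ p ∈ q.primesBelow, p ^ e p ≠ 0 :=
    prod_ne_zero_iff.mpr fun p hp => pow_ne_zero _ (hs p hp).ne_zero
  refine ⟨∏ p ∈ q.primesBelow, p ^ e p, hR0, fun p hp hdvd => ?_, ?_⟩
  · obtain ⟨a, ha, hpa⟩ := (Prime.dvd_finsetProd_iff hp.prime _).mp hdvd
    rw [(Nat.prime_dvd_prime_iff_eq hp (hs a ha)).mp (hp.dvd_of_dvd_pow hpa)]
    exact Nat.lt_of_mem_primesBelow ha
  refine isSuperchampion_of_forall_weight_le fun r k hr => ?_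
  rw [Nat.factorization_mul hq.ne_zero hR0, Finsupp.add_apply, hq.factorization,
    factorization_prod_pow_apply hs, Finsupp.single_apply]
  rcases lt_trichotomy r q with hrq | rfl | hrq
  · simpa [hrq.ne', Nat.mem_primesBelow, hrq, hr] using he r (Nat.mem_primesBelow.mpr ⟨hrq, hr⟩) k
  · simpa [Nat.mem_primesBelow, weight_self_one hr.two_le] using weight_nonpos_of_le hq3 le_rfl k
  · simpa [hrq.ne, Nat.mem_primesBelow, hrq.not_gt, weight] using
      weight_nonpos_of_le hq3 hrq.le k

lemma exists_landauInc_landau_lt_landau_add_two {q : ℕ} (hq : q.Prime) (hq2 : (q + 2).Prime)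
    (hq3 : 3 ≤ q) : ∃ n, q ≤ n ∧ landauInc n ∧ landau n < landau (n + 2) := by
  obtain ⟨R, hR0, hRq, hN⟩ := exists_isSuperchampion_prime_mul hq hq3
  have hcop {p : ℕ} (hp : p.Prime) (hqp : q ≤ p) : p.Coprime R :=
    (Nat.Prime.coprime_iff_not_dvd hp).mpr fun h => (hRq p hp h).not_ge hqp
  have ht : 0 < (q : ℝ) / Real.log q :=
    div_pos (by positivity) (Real.log_pos (by exact_mod_cast hq.one_lt))
  have hN0 : q * R ≠ 0 := mul_ne_zero hq.ne_zero hR0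
  have hell : ell (q * R) = q + ell R := by rw [ell_mul_of_coprime (hcop hq le_rfl), ell_prime hq]
  refine ⟨ell (q * R), by omega, hN.landauInc_ell ht hN0 (by omega), ?_⟩
  calc landau (ell (q * R)) = q * R := hN.landau_ell ht hN0
    _ < (q + 2) * R := Nat.mul_lt_mul_of_pos_right (by omega) (Nat.pos_of_ne_zero hR0)
    _ ≤ landau (ell (q * R) + 2) := by
      refine le_landau (mul_ne_zero hq2.ne_zero hR0) ?_
      rw [ell_mul_of_coprime (hcop hq2 (by omega)), ell_prime hq2, hell]
      omega

end LandauGap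

/-- Under the twin prime conjecture, the gap between consecutive points
of increase of Landau's function satisfies `n_{k+1} - n_k ≤ 2` for infinitely many `k`. -/
theorem gaps_landau_increase_le_two_of_twin_primes
    (htwin : {p : ℕ | p.Prime ∧ (p + 2).Prime}.Infinite) :
    {k : ℕ | landauNth (k + 1) - landauNth k ≤ 2}.Infinite := by
  refine Nat.infinite_setOf_nth_succ_sub_nth_le fun B => ?_
  obtain ⟨q, ⟨hq, hq2⟩, hBq⟩ := htwin.exists_gt (B + 2)
  obtain ⟨n, hqn, hn, hlt⟩ :=
    LandauGap.exists_landauInc_landau_lt_landau_add_two hq hq2 (by omega)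
  obtain ⟨m, hnm, hmn, hm⟩ := LandauGap.exists_landauInc_of_landau_lt (by omega) hlt
  exact ⟨n, by omega, hn, m, hnm, hmn, hm⟩
end

section
/- There exist a constant C > 0 and ξ₀ such that for every real ξ ≥ ξ₀, setting ξ′ = ξ + ξ/log ξ, the number of pairs (Q, k) with Q prime and k ≥ 2 an integer satisfying ξ/log ξ ≤ (Q^k − Q^{k−1})/log Q ≤ ξ′/log ξ′ is at most C·√ξ. -/
/-!
Since `k ≥ 2` gives `Q ^ (k - 1) ≤ Q ^ k / 2` and `log (Q ^ k) ≥ 2 log Q`, the upper bound forces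
`Q ^ k / log (Q ^ k) ≤ ξ' / log ξ'`, hence `Q ^ k ≤ ξ' ≤ 2ξ` because `x / log x` is increasing
for `x ≥ e`. The pairs `(Q, k)` with `Q ^ k ≤ X` inject into `[1, √X] × {0, 1}` via
`(Q, k) ↦ (Q ^ ⌊k/2⌋, k mod 2)`, by unique factorisation, so there are at most `2√X` of them.
-/

open Real Set

theorem Real.div_log_strictMonoOn : StrictMonoOn (fun x : ℝ ↦ x / log x) (Ici (exp 1)) := by
  intro a ha b hb hab
  have ha_pos : 0 < a := (exp_pos 1).trans_le ha
  have hloga : 1 ≤ log a := by rwa [le_log_iff_exp_le ha_pos]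
  have hlogb : 0 < log b := by linarith [log_le_log ha_pos hab.le]
  have hba : b / a ≠ 1 := by rw [Ne, div_eq_one_iff_eq ha_pos.ne']; exact hab.ne'
  have hlogb_lt : log b < log a * (b / a) :=
    calc log b = log a + log (b / a) := by rw [log_div (by linarith) ha_pos.ne']; ring
      _ < log a + (b / a - 1) := by
          gcongr; exact log_lt_sub_one_of_pos (div_pos (by linarith) ha_pos) hba
      _ ≤ log a + log a * (b / a - 1) := by
          gcongr
          exact le_mul_of_one_le_left (by rw [sub_nonneg, le_div_iff₀ ha_pos]; linarith) hloga
      _ = log a * (b / a) := by ring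
  rw [div_lt_div_iff₀ (by linarith) hlogb]
  calc a * log b < a * (log a * (b / a)) := by gcongr
    _ = b * log a := by field_simp

theorem pow_div_log_pow_le_sub_div_log {q : ℝ} (hq : 2 ≤ q) {k : ℕ} (hk : 2 ≤ k) :
    q ^ k / log (q ^ k) ≤ (q ^ k - q ^ (k - 1)) / log q := by
  have hlogq : 0 < log q := log_pos (by linarith)
  have hsplit : q ^ k = q ^ (k - 1) * q := by rw [← pow_succ]; congr 1; omega
  have hhalf : q ^ k / 2 ≤ q ^ k - q ^ (k - 1) := by
    nlinarith [pow_nonneg (show (0 : ℝ) ≤ q by linarith) (k - 1)]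
  calc q ^ k / log (q ^ k) = q ^ k / 2 / (k / 2 * log q) := by rw [log_pow]; field_simp
    _ ≤ q ^ k / 2 / log q := by
        gcongr; rw [le_mul_iff_one_le_left hlogq, le_div_iff₀ two_pos, one_mul]; exact_mod_cast hk
    _ ≤ (q ^ k - q ^ (k - 1)) / log q := by gcongr

theorem pow_le_of_sub_pow_div_log_le {Q k : ℕ} (hQ : Q.Prime) (hk : 2 ≤ k) {y : ℝ}
    (hy : exp 1 ≤ y)
    (h : ((Q : ℝ) ^ k - (Q : ℝ) ^ (k - 1)) / log Q ≤ y / log y) :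
    (Q : ℝ) ^ k ≤ y := by
  have hQ2 : (2 : ℝ) ≤ Q := by exact_mod_cast hQ.two_le
  have hQk : exp 1 ≤ (Q : ℝ) ^ k :=
    calc exp 1 ≤ 2 ^ 2 := by linarith [exp_one_lt_d9]
      _ ≤ (Q : ℝ) ^ 2 := by gcongr
      _ ≤ (Q : ℝ) ^ k := pow_le_pow_right₀ (by linarith) hk
  exact (div_log_strictMonoOn.le_iff_le hQk hy).mp
    ((pow_div_log_pow_le_sub_div_log hQ2 hk).trans h)

theorem Nat.Prime.injOn_pow_half_mod_two :
    InjOn (fun qk : ℕ × ℕ ↦ (qk.1 ^ (qk.2 / 2), qk.2 % 2)) {qk | qk.1.Prime ∧ 2 ≤ qk.2} := by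
  rintro ⟨Q, k⟩ ⟨hQ, hk⟩ ⟨Q', k'⟩ ⟨hQ', hk'⟩ h
  simp only [Prod.mk.injEq] at h hk hk' ⊢
  obtain ⟨rfl, hhalf⟩ := hQ.pow_inj' hQ' (by omega) (by omega) h.1
  exact ⟨rfl, by omega⟩

theorem ncard_le_two_mul_sqrt_of_prime_pow_le {s : Set (ℕ × ℕ)} {X : ℝ}
    (hs : ∀ qk ∈ s, qk.1.Prime ∧ 2 ≤ qk.2 ∧ (qk.1 : ℝ) ^ qk.2 ≤ X) :
    (s.ncard : ℝ) ≤ 2 * √X := by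
  set n := ⌊√X⌋₊
  have hmaps : ∀ qk ∈ s, (qk.1 ^ (qk.2 / 2), qk.2 % 2) ∈
      (↑(Finset.Icc 1 n ×ˢ Finset.range 2) : Set (ℕ × ℕ)) := by
    rintro ⟨Q, k⟩ hqk
    obtain ⟨hQ, -, hQk⟩ := hs _ hqk
    have hsq : ((Q ^ (k / 2) : ℕ) : ℝ) ^ 2 ≤ X :=
      calc ((Q ^ (k / 2) : ℕ) : ℝ) ^ 2 = (Q : ℝ) ^ (2 * (k / 2)) := by push_cast; ring
        _ ≤ (Q : ℝ) ^ k := pow_le_pow_right₀ (by exact_mod_cast hQ.one_le) (Nat.mul_div_le k 2)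
        _ ≤ X := hQk
    simp only [Finset.coe_product, mem_prod, Finset.mem_coe, Finset.mem_Icc, Finset.mem_range]
    exact ⟨⟨Nat.one_le_pow _ _ hQ.pos, Nat.le_floor (le_sqrt_of_sq_le hsq)⟩, Nat.mod_lt _ two_pos⟩
  have hcard := ncard_le_ncard_of_injOn _ hmaps
    (Nat.Prime.injOn_pow_half_mod_two.mono fun qk hqk ↦ (hs qk hqk).imp_right And.left)
  rw [ncard_coe_finset, Finset.card_product, Nat.card_Icc, Finset.card_range,
    Nat.add_sub_cancel] at hcard
  calc (s.ncard : ℝ) ≤ (n * 2 : ℕ) := by exact_mod_cast hcard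
    _ ≤ 2 * √X := by push_cast; linarith [Nat.floor_le (sqrt_nonneg X)]

/-- There exist `C > 0` and `ξ₀` such that for all `ξ ≥ ξ₀`, with
`ξ' = ξ + ξ/log ξ`, the number of pairs `(Q, k)`, `Q` prime, `k ≥ 2`, with
`ξ/log ξ ≤ (Q^k - Q^{k-1})/log Q ≤ ξ'/log ξ'` is at most `C √ξ`. -/
theorem card_prime_power_pairs_le :
    ∃ C : ℝ, 0 < C ∧ ∃ ξ₀ : ℝ, ∀ ξ : ℝ, ξ₀ ≤ ξ →
      ({qk : ℕ × ℕ | qk.1.Prime ∧ 2 ≤ qk.2 ∧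
          ξ / Real.log ξ ≤
            ((qk.1 : ℝ) ^ qk.2 - (qk.1 : ℝ) ^ (qk.2 - 1)) / Real.log qk.1 ∧
          ((qk.1 : ℝ) ^ qk.2 - (qk.1 : ℝ) ^ (qk.2 - 1)) / Real.log qk.1 ≤
            (ξ + ξ / Real.log ξ) / Real.log (ξ + ξ / Real.log ξ)}.ncard : ℝ) ≤
        C * Real.sqrt ξ := by
  refine ⟨2 * √2, by positivity, exp 1, fun ξ hξ ↦ ?_⟩
  have hξ_pos : 0 < ξ := (exp_pos 1).trans_le hξ
  have hlog : 1 ≤ log ξ := by rwa [le_log_iff_exp_le hξ_pos]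
  have hξ' : exp 1 ≤ ξ + ξ / log ξ :=
    hξ.trans (le_add_of_nonneg_right (div_nonneg hξ_pos.le (by linarith)))
  have hξ'_le : ξ + ξ / log ξ ≤ 2 * ξ := by linarith [div_le_self hξ_pos.le hlog]
  refine (ncard_le_two_mul_sqrt_of_prime_pow_le (X := 2 * ξ) fun qk hqk ↦ ?_).trans_eq ?_
  · obtain ⟨hQ, hk, -, h⟩ := hqk
    exact ⟨hQ, hk, (pow_le_of_sub_pow_div_log_le hQ hk hξ' h).trans hξ'_le⟩
  · rw [sqrt_mul zero_le_two]; ring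
end
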